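/- Let Λ be a family of partitions indexed by partitions of k with |Λ| := ∑_{λ⊢k}|Λ(λ)| < n. Then the number of k-partial permutations of n of type Λ with |d| = k|Λ| equals (n−|Λ|+m₁(Λ(1^k)) choose m₁(Λ(1^k))) times the size of the conjugacy class in B_{kn}^k indexed by the family Λ with Λ(1^k) replaced by Λ(1^k) ∪ (1^{n−|Λ|}). -/

import Mathlib

open Equiv Finset

namespace KWr

/-- The `i`-th block `p_k(i)` (0-indexed): elements `x ∈ [kn]` with `x / k = i`. -/
def pk (k n : ℕ) (i : ℕ) : Finset (Fin (k * n)) :=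
  Finset.univ.filter (fun x => (x : ℕ) / k = i)

/-- `w` maps every block onto some block. -/
def IsBlockPerm (k n : ℕ) (w : Perm (Fin (k * n))) : Prop :=
  ∀ i : Fin n, ∃ j : Fin n, (pk k n (i : ℕ)).image w = pk k n (j : ℕ)

theorem isBlockPerm_one (k n : ℕ) : IsBlockPerm k n 1 := fun i =>
  ⟨i, by simp [pk]⟩

theorem isBlockPerm_mul (k n : ℕ) {a b : Perm (Fin (k * n))}
    (ha : IsBlockPerm k n a) (hb : IsBlockPerm k n b) : IsBlockPerm k n (a * b) := by
  intro i
  obtain ⟨j, hj⟩ := hb i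
  obtain ⟨l, hl⟩ := ha j
  refine ⟨l, ?_⟩
  rw [← hl, ← hj, Finset.image_image]
  rfl

theorem isBlockPerm_pow (k n : ℕ) {a : Perm (Fin (k * n))} (ha : IsBlockPerm k n a) :
    ∀ m : ℕ, IsBlockPerm k n (a ^ m) := by
  intro m
  induction m with
  | zero => simpa using isBlockPerm_one k n
  | succ m ih => rw [pow_succ]; exact isBlockPerm_mul k n ih ha

/-- The group `B_{kn}^k` of block permutations, as a subgroup of `S_{kn}`. -/
def Bgrp (k n : ℕ) : Subgroup (Perm (Fin (k * n))) where
  carrier := {w | IsBlockPerm k n w}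
  one_mem' := isBlockPerm_one k n
  mul_mem' := fun ha hb => isBlockPerm_mul k n ha hb
  inv_mem' := by
    intro a ha
    have ho : 0 < orderOf a := orderOf_pos a
    have h1 : a⁻¹ = a ^ (orderOf a - 1) := by
      have h : a ^ (orderOf a - 1) * a = 1 := by
        rw [← pow_succ, Nat.sub_add_cancel ho, pow_orderOf_eq_one]
      exact inv_eq_of_mul_eq_one_left h
    show IsBlockPerm k n a⁻¹
    rw [h1]
    exact isBlockPerm_pow k n ha _

/-- The first element of the `i`-th block. -/
def elemIn (k n : ℕ) (hk : 0 < k) (i : Fin n) : Fin (k * n) :=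
  ⟨(i : ℕ) * k, by
    calc (i : ℕ) * k < n * k := by
          exact Nat.mul_lt_mul_of_lt_of_le i.2 (le_refl k) hk
      _ = k * n := Nat.mul_comm n k⟩

/-- The map induced by `w` on block indices. -/
def blockMap (k n : ℕ) (hk : 0 < k) (w : Perm (Fin (k * n))) (i : Fin n) : Fin n :=
  ⟨((w (elemIn k n hk i)) : ℕ) / k, by
    refine (Nat.div_lt_iff_lt_mul hk).mpr ?_
    calc ((w (elemIn k n hk i)) : ℕ) < k * n := (w (elemIn k n hk i)).2
      _ = n * k := Nat.mul_comm k n⟩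

/-- The permutation `p_w` of block indices induced by a block permutation `w`. -/
noncomputable def pPerm (k n : ℕ) (hk : 0 < k) (w : Perm (Fin (k * n))) : Perm (Fin n) :=
  if h : Function.Bijective (blockMap k n hk w) then Equiv.ofBijective _ h else 1

/-- Length of the cycle of `i` under `p`. -/
noncomputable def cycLen {n : ℕ} (p : Perm (Fin n)) (i : Fin n) : ℕ := Function.minimalPeriod p i

/-- The `a`-th element of the `i`-th block. -/
def inBlock (k n : ℕ) (hk : 0 < k) (i : Fin n) (a : Fin k) : Fin (k * n) :=
  ⟨(i : ℕ) * k + (a : ℕ), by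
    calc (i : ℕ) * k + (a : ℕ) < (i : ℕ) * k + k := Nat.add_lt_add_left a.2 _
      _ = ((i : ℕ) + 1) * k := by ring
      _ ≤ n * k := Nat.mul_le_mul_right k i.2
      _ = k * n := Nat.mul_comm n k⟩

/-- The cycle product of `w` at the block `i`: the return map of `w` on the block `i`,
viewed as a permutation of `Fin k`. -/
noncomputable def cycProd (k n : ℕ) (hk : 0 < k) (w : Perm (Fin (k * n))) (i : Fin n) :
    Perm (Fin k) :=
  if h : Function.Bijective (fun a : Fin k =>
      (⟨((w ^ cycLen (pPerm k n hk w) i) (inBlock k n hk i a) : ℕ) % k,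
        Nat.mod_lt _ hk⟩ : Fin k))
  then Equiv.ofBijective _ h else 1

/-- The partition `(1^k)` of `k`. -/
def onePartition (k : ℕ) : Nat.Partition k where
  parts := Multiset.replicate k 1
  parts_pos := fun {i} hi => by rw [Multiset.eq_of_mem_replicate hi]; exact one_pos
  parts_sum := by simp

-- The type of a block permutation `w` of `[kn]`: for each partition `ρ` of `k`, the
-- multiset `tyFam k n hk w ρ` collects, over all cycles of the induced block permutation
-- `p_w` whose cycle product has cycle type `ρ`, the length of the cycle.
open scoped Classical in
noncomputable def tyFam (k n : ℕ) (hk : 0 < k) (w : Perm (Fin (k * n)))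
    (ρ : Nat.Partition k) : Multiset ℕ :=
  (Finset.univ.filter (fun i : Fin n =>
      (∀ j : Fin n, (pPerm k n hk w).SameCycle i j → i ≤ j) ∧
      (cycProd k n hk w i).partition.parts = ρ.parts)).val.map
    (fun i => cycLen (pPerm k n hk w) i)

/-- Total size of a family of partitions indexed by the partitions of `k`. -/
noncomputable def famSize (k : ℕ) (Λ : Nat.Partition k → Multiset ℕ) : ℕ :=
  ∑ ρ : Nat.Partition k, (Λ ρ).sum

-- Complete a family of partitions `Λ` to total size `n` by adding parts `1`
-- to the component indexed by `(1^k)`.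
open scoped Classical in
noncomputable def ExtFam (k n : ℕ) (Λ : Nat.Partition k → Multiset ℕ) :
    Nat.Partition k → Multiset ℕ := fun ρ =>
  if ρ = onePartition k then Λ ρ + Multiset.replicate (n - famSize k Λ) 1 else Λ ρ

/-- `z_λ = ∏ r, r^{m_r(λ)} m_r(λ)!` for a partition given as a multiset of parts. -/
def zOf (m : Multiset ℕ) : ℕ :=
  ∏ r ∈ m.toFinset, r ^ m.count r * Nat.factorial (m.count r)

/-- `Z_Λ = ∏_{λ ⊢ k} z_{Λ(λ)} z_λ^{l(Λ(λ))}`. -/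
noncomputable def ZFam (k : ℕ) (Λ : Nat.Partition k → Multiset ℕ) : ℕ :=
  ∏ ρ : Nat.Partition k, zOf (Λ ρ) * zOf ρ.parts ^ (Multiset.card (Λ ρ))

/-- A `k`-partial permutation of `n`, encoded as a pair `(s, w)` where `s` is the set of
block indices of `d` and `w` is the extension of `ω` to `[kn]` by the identity:
`w` is a block permutation fixing pointwise every block outside `s`. -/
def IsKPP (k n : ℕ) (pr : Finset (Fin n) × Perm (Fin (k * n))) : Prop :=
  IsBlockPerm k n pr.2 ∧
    ∀ x : Fin (k * n), (¬ ∃ i ∈ pr.1, (x : ℕ) / k = (i : ℕ)) → pr.2 x = x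

/-- The set of `k`-partial permutations of `n`. -/
def KPP (k n : ℕ) : Type := {pr : Finset (Fin n) × Perm (Fin (k * n)) // IsKPP k n pr}

/-- The action `σ · (d, ω) = (σ(d), σωσ⁻¹)` on (the underlying data of)
`k`-partial permutations. -/
noncomputable def actKPP (k n : ℕ) (hk : 0 < k) (σ : Perm (Fin (k * n)))
    (pr : Finset (Fin n) × Perm (Fin (k * n))) : Finset (Fin n) × Perm (Fin (k * n)) :=
  (pr.1.image (fun i => pPerm k n hk σ i), σ * pr.2 * σ⁻¹)

/-- A `k`-partial permutation `(d, ω)` has type `Λ` (a family of partitions indexed by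
the partitions of `k`) iff `d` consists of `|Λ|` blocks and the type of `ω` is `Λ`;
in terms of the global extension `w`, the type of `w` is `Λ` completed with
`n - |Λ|` parts equal to `1` in the component `(1^k)`. -/
def HasTypeKPP (k n : ℕ) (hk : 0 < k) (p : KPP k n)
    (Λ : Nat.Partition k → Multiset ℕ) : Prop :=
  p.val.1.card = famSize k Λ ∧ ∀ ρ, tyFam k n hk p.val.2 ρ = ExtFam k n Λ ρ

/-- `deg₁(d, ω)`: the number of blocks of `d` plus the number of blocks of `d` on which
`ω` acts as the identity. -/
def deg1 (k n : ℕ) (pr : Finset (Fin n) × Perm (Fin (k * n))) : ℕ :=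
  pr.1.card +
    (pr.1.filter (fun i : Fin n => ∀ x : Fin (k * n), (x : ℕ) / k = (i : ℕ) → pr.2 x = x)).card


/-- The automorphism of `S_k^n` permuting coordinates by `σ`. -/
def permCoordAut (k n : ℕ) (σ : Perm (Fin n)) : MulAut (Fin n → Perm (Fin k)) where
  toFun f := f ∘ σ.symm
  invFun f := f ∘ σ
  left_inv f := by funext i; simp
  right_inv f := by funext i; simp
  map_mul' f g := rfl

/-- The action of `S_n` on `S_k^n` permuting coordinates, as a homomorphism. -/
def permCoordHom (k n : ℕ) : Perm (Fin n) →* MulAut (Fin n → Perm (Fin k)) where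
  toFun := permCoordAut k n
  map_one' := by apply MulEquiv.ext; intro f; rfl
  map_mul' σ τ := by apply MulEquiv.ext; intro f; rfl

-- The class sum, in the group algebra of `S_n`, of the permutations of cycle type `m`.
open scoped Classical in
noncomputable def CS (n : ℕ) (m : Multiset ℕ) : MonoidAlgebra ℂ (Perm (Fin n)) :=
  ∑ σ ∈ Finset.univ.filter (fun σ : Perm (Fin n) => σ.partition.parts = m),
    MonoidAlgebra.of ℂ (Perm (Fin n)) σ

theorem twoPos : (0 : ℕ) < 2 := by norm_num

-- The class sum, in the group algebra of the hyperoctahedral group `B_{2n}^2`, of the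
-- conjugacy class indexed by the bipartition `(l1, l2)` of `n`, where `l1` corresponds
-- to the partition `(1,1)` of `2` and `l2` to the partition `(2)`.
open scoped Classical in
noncomputable def CB (n : ℕ) (l1 l2 : Multiset ℕ) : MonoidAlgebra ℂ (Bgrp 2 n) :=
  ∑ w ∈ Finset.univ.filter (fun w : Bgrp 2 n =>
      tyFam 2 n twoPos (w : Perm (Fin (2 * n))) (onePartition 2) = l1 ∧
      tyFam 2 n twoPos (w : Perm (Fin (2 * n))) (Nat.Partition.indiscrete 2) = l2),
    MonoidAlgebra.of ℂ (Bgrp 2 n) w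

/-! A `k`-partial permutation `(s, w)` of type `Λ` is a block permutation `w` of type
`Λ ∪ (1^{n-|Λ|})` together with a set `s` of `|Λ|` blocks containing every block that `w` moves.
A block is pointwise fixed by `w` exactly when it is a fixed point of `p_w` with trivial cycle
product, i.e. a part `1` of the `(1^k)` component of the type of `w`. So `w` fixes
`m₁(Λ(1^k)) + n - |Λ|` blocks, and the complement of `s` is an arbitrary `(n - |Λ|)`-subset
of them. -/

theorem _root_.Equiv.Perm.partition_parts_eq_replicate_one_iff {α : Type*} [Fintype α]
    [DecidableEq α] (σ : Perm α) :
    σ.partition.parts = Multiset.replicate (Fintype.card α) 1 ↔ σ = 1 := by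
  rw [← isConj_one_right, Perm.partition_eq_of_isConj, Nat.Partition.ext_iff]
  simp only [Perm.parts_partition, Perm.cycleType_one, Perm.support_one, card_empty, zero_add,
    Nat.sub_zero]
  exact eq_comm

theorem _root_.Finset.card_compl_subset_card_eq {α : Type*} [Fintype α] [DecidableEq α]
    (P : Finset α) {F : ℕ} (hF : F ≤ Fintype.card α) :
    Nat.card {s : Finset α // sᶜ ⊆ P ∧ #s = F} = (#P).choose (Fintype.card α - F) := by
  have hmem : ∀ s : Finset α, sᶜ ⊆ P ∧ #s = F ↔ sᶜ ∈ powersetCard (Fintype.card α - F) P := by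
    intro s
    have := card_le_univ s
    rw [mem_powersetCard, card_compl]
    exact and_congr_right fun _ => by omega
  rw [Nat.card_congr ((compl_involutive.toPerm _).subtypeEquiv hmem), Nat.card_eq_fintype_card,
    Fintype.card_coe, card_powersetCard]

section Blocks

variable {k n : ℕ}

theorem mem_pk {x : Fin (k * n)} {i : ℕ} : x ∈ pk k n i ↔ (x : ℕ) / k = i := by
  simp [pk]

theorem elemIn_div (hk : 0 < k) (i : Fin n) : (elemIn k n hk i : ℕ) / k = i := by
  simp [elemIn, Nat.mul_div_cancel _ hk]

theorem inBlock_div (hk : 0 < k) (i : Fin n) (a : Fin k) : (inBlock k n hk i a : ℕ) / k = i := by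
  simp only [inBlock]
  rw [Nat.mul_comm, Nat.mul_add_div hk, Nat.div_eq_of_lt a.2, Nat.add_zero]

theorem inBlock_mod (hk : 0 < k) (i : Fin n) (a : Fin k) : (inBlock k n hk i a : ℕ) % k = a := by
  simp only [inBlock]
  rw [Nat.mul_comm, Nat.mul_add_mod, Nat.mod_eq_of_lt a.2]

theorem eq_inBlock_of_div_eq (hk : 0 < k) {x : Fin (k * n)} {i : Fin n} (hx : (x : ℕ) / k = i) :
    x = inBlock k n hk i ⟨(x : ℕ) % k, Nat.mod_lt _ hk⟩ := by
  ext
  simp only [inBlock]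
  rw [← hx]
  exact (Nat.div_add_mod' _ _).symm

theorem val_div_lt (hk : 0 < k) (x : Fin (k * n)) : (x : ℕ) / k < n :=
  (Nat.div_lt_iff_lt_mul hk).mpr (Nat.mul_comm k n ▸ x.2)

variable {w : Perm (Fin (k * n))}

theorem image_pk_eq_blockMap (hk : 0 < k) (hw : IsBlockPerm k n w) (i : Fin n) :
    (pk k n i).image w = pk k n (blockMap k n hk w i) := by
  obtain ⟨j, hj⟩ := hw i
  have hij : (blockMap k n hk w i : ℕ) = j :=
    mem_pk.mp (hj ▸ mem_image_of_mem w (mem_pk.mpr (elemIn_div hk i)))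
  rw [hj, hij]

theorem blockMap_injective (hk : 0 < k) (hw : IsBlockPerm k n w) :
    Function.Injective (blockMap k n hk w) := by
  intro i i' h
  have hmem : w (elemIn k n hk i) ∈ (pk k n i').image w := by
    rw [image_pk_eq_blockMap hk hw, ← h, ← image_pk_eq_blockMap hk hw]
    exact mem_image_of_mem w (mem_pk.mpr (elemIn_div hk i))
  rw [w.injective.mem_finset_image, mem_pk, elemIn_div] at hmem
  exact Fin.ext hmem

theorem pPerm_apply (hk : 0 < k) (hw : IsBlockPerm k n w) (i : Fin n) :
    pPerm k n hk w i = blockMap k n hk w i := by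
  rw [pPerm, dif_pos (Finite.injective_iff_bijective.mp (blockMap_injective hk hw))]
  rfl

theorem div_apply_eq_pPerm (hk : 0 < k) (hw : IsBlockPerm k n w) {x : Fin (k * n)} {i : Fin n}
    (hx : (x : ℕ) / k = i) : (w x : ℕ) / k = pPerm k n hk w i := by
  rw [pPerm_apply hk hw, ← mem_pk, ← image_pk_eq_blockMap hk hw]
  exact mem_image_of_mem w (mem_pk.mpr hx)

end Blocks

section FixedBlocks

variable {k n : ℕ} {w : Perm (Fin (k * n))}

def fixedBlocks (k n : ℕ) (w : Perm (Fin (k * n))) : Finset (Fin n) :=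
  univ.filter fun i => ∀ x : Fin (k * n), (x : ℕ) / k = i → w x = x

theorem cycProd_apply (hk : 0 < k) (hw : IsBlockPerm k n w) {i : Fin n}
    (hi : pPerm k n hk w i = i) (a : Fin k) :
    w (inBlock k n hk i a) = inBlock k n hk i (cycProd k n hk w i a) := by
  have hL : cycLen (pPerm k n hk w) i = 1 := Function.minimalPeriod_eq_one_iff_isFixedPt.mpr hi
  have hback : ∀ a, w (inBlock k n hk i a) =
      inBlock k n hk i ⟨(w (inBlock k n hk i a) : ℕ) % k, Nat.mod_lt _ hk⟩ := fun a =>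
    eq_inBlock_of_div_eq hk ((div_apply_eq_pPerm hk hw (inBlock_div hk i a)).trans (by rw [hi]))
  have hinj : Function.Injective fun a : Fin k => (⟨((w ^ cycLen (pPerm k n hk w) i)
      (inBlock k n hk i a) : ℕ) % k, Nat.mod_lt _ hk⟩ : Fin k) := by
    intro a b hab
    simp only [hL, pow_one] at hab
    have := w.injective ((hback a).trans (hab ▸ (hback b).symm))
    rw [Fin.ext_iff, ← inBlock_mod hk i a, this, inBlock_mod]
  rw [cycProd, dif_pos (Finite.injective_iff_bijective.mp hinj), Equiv.ofBijective_apply]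
  simp only [hL, pow_one]
  exact hback a

theorem mem_fixedBlocks_iff (hk : 0 < k) (hw : IsBlockPerm k n w) (i : Fin n) :
    i ∈ fixedBlocks k n w ↔ pPerm k n hk w i = i ∧ cycProd k n hk w i = 1 := by
  simp only [fixedBlocks, mem_filter, mem_univ, true_and]
  constructor
  · intro h
    have hi : pPerm k n hk w i = i := by
      ext
      rw [← div_apply_eq_pPerm hk hw (elemIn_div hk i), h _ (elemIn_div hk i), elemIn_div]
    refine ⟨hi, Equiv.ext fun a => ?_⟩
    have := (cycProd_apply hk hw hi a).symm.trans (h _ (inBlock_div hk i a))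
    rw [Fin.ext_iff, ← inBlock_mod hk i (cycProd k n hk w i a), this, inBlock_mod, Perm.one_apply]
  · rintro ⟨hi, hc⟩ x hx
    rw [eq_inBlock_of_div_eq hk hx, cycProd_apply hk hw hi, hc, Perm.one_apply]


theorem count_one_tyFam_onePartition (hk : 0 < k) (hw : IsBlockPerm k n w) :
    (tyFam k n hk w (onePartition k)).count 1 = #(fixedBlocks k n w) := by
  rw [tyFam, Multiset.count_map, ← filter_val, filter_filter, card_val]
  congr 1
  ext i
  have hone : (onePartition k).parts = Multiset.replicate (Fintype.card (Fin k)) 1 := by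
    rw [Fintype.card_fin]; rfl
  simp only [mem_filter, mem_univ, true_and, mem_fixedBlocks_iff hk hw, hone,
    Perm.partition_parts_eq_replicate_one_iff, eq_comm (a := 1), cycLen,
    Function.minimalPeriod_eq_one_iff_isFixedPt]
  exact ⟨fun ⟨⟨_, hc⟩, hi⟩ => ⟨hi, hc⟩,
    fun ⟨hi, hc⟩ => ⟨⟨fun j hj => (hj.eq_of_left hi).le, hc⟩, hi⟩⟩

theorem isKPP_iff (hk : 0 < k) {s : Finset (Fin n)} :
    IsKPP k n (s, w) ↔ IsBlockPerm k n w ∧ sᶜ ⊆ fixedBlocks k n w := by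
  refine and_congr_right fun _ => ⟨fun h i hi => ?_, fun h x hx => ?_⟩
  · simp only [fixedBlocks, mem_filter, mem_univ, true_and]
    refine fun x hx => h x ?_
    rintro ⟨j, hj, hjx⟩
    exact mem_compl.mp hi (Fin.ext (hx ▸ hjx) ▸ hj)
  · have hi : (⟨(x : ℕ) / k, val_div_lt hk x⟩ : Fin n) ∈ sᶜ :=
      mem_compl.mpr fun hs => hx ⟨_, hs, rfl⟩
    exact (mem_filter.mp (h hi)).2 x rfl

end FixedBlocks

section Counting

variable {k n : ℕ}

def typeKPPEquivSigma (hk : 0 < k) (Λ : Nat.Partition k → Multiset ℕ) :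
    {p : KPP k n // HasTypeKPP k n hk p Λ} ≃
      Σ w : {w : Perm (Fin (k * n)) //
          IsBlockPerm k n w ∧ ∀ ρ, tyFam k n hk w ρ = ExtFam k n Λ ρ},
        {s : Finset (Fin n) // sᶜ ⊆ fixedBlocks k n w ∧ #s = famSize k Λ} where
  toFun p := ⟨⟨p.1.1.2, p.1.2.1, p.2.2⟩, p.1.1.1, ((isKPP_iff hk).mp p.1.2).2, p.2.1⟩
  invFun q := ⟨⟨(q.2.1, q.1.1), (isKPP_iff hk).mpr ⟨q.1.2.1, q.2.2.1⟩⟩, q.2.2.2, q.1.2.2⟩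
  left_inv _ := rfl
  right_inv _ := rfl

theorem card_fixedBlocks_of_tyFam_eq (hk : 0 < k) {w : Perm (Fin (k * n))}
    (hw : IsBlockPerm k n w) {Λ : Nat.Partition k → Multiset ℕ}
    (hty : tyFam k n hk w (onePartition k) = ExtFam k n Λ (onePartition k)) :
    #(fixedBlocks k n w) = n - famSize k Λ + (Λ (onePartition k)).count 1 := by
  rw [← count_one_tyFam_onePartition hk hw, hty, ExtFam, if_pos rfl, Multiset.count_add,
    Multiset.count_replicate_self, add_comm]

end Counting

theorem card_KPP_type_general (k n : ℕ) (hk : 0 < k) (Λ : Nat.Partition k → Multiset ℕ)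
    (hsize : famSize k Λ < n) :
    Nat.card {p : KPP k n // HasTypeKPP k n hk p Λ} =
      Nat.choose (n - famSize k Λ + (Λ (onePartition k)).count 1)
          ((Λ (onePartition k)).count 1) *
        Nat.card {w : Perm (Fin (k * n)) //
          IsBlockPerm k n w ∧ ∀ ρ, tyFam k n hk w ρ = ExtFam k n Λ ρ} := by
  classical
  rw [Nat.card_congr (typeKPPEquivSigma hk Λ), Nat.card_sigma, Nat.card_eq_fintype_card,
    ← card_univ]
  refine (sum_const_nat fun w _ => ?_).trans (mul_comm _ _)
  rw [card_compl_subset_card_eq _ (by simpa using hsize.le),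
    card_fixedBlocks_of_tyFam_eq hk w.2.1 (w.2.2 _), Fintype.card_fin]
  exact Nat.choose_symm_add

/-- For a family of partitions `Λ` with `|Λ| < n`, the number of `k`-partial permutations
of `n` of type `Λ` (with support of `|Λ|` blocks) equals
`(n - |Λ| + m₁(Λ(1^k)) choose m₁(Λ(1^k)))` times the size of the conjugacy class of
`B_{kn}^k` indexed by `Λ` completed with parts `1` in the component `(1^k)`. -/
theorem card_KPP_type (k n : ℕ) (hk : 0 < k) (Λ : Nat.Partition k → Multiset ℕ)
    (hpos : ∀ ρ, ∀ x ∈ Λ ρ, 0 < x) (hsize : famSize k Λ < n) :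
    Nat.card {p : KPP k n // HasTypeKPP k n hk p Λ} =
      Nat.choose (n - famSize k Λ + (Λ (onePartition k)).count 1)
          ((Λ (onePartition k)).count 1) *
        Nat.card {w : Perm (Fin (k * n)) //
          IsBlockPerm k n w ∧ ∀ ρ, tyFam k n hk w ρ = ExtFam k n Λ ρ} :=
  card_KPP_type_general k n hk Λ hsize

end KWr
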